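/- Let p be a prime, let n ≥ 2, and let Δ_n(p) be the kernel of the reduction homomorphism SL_n(ℤ) → SL_n(ℤ/pℤ). Then every finite subset of Δ_n(p) that generates a profinitely dense subgroup of Δ_n(p) has at least n² − 1 elements; in particular, every profinitely dense free subgroup of Δ_n(p) of finite rank has rank at least n² − 1. -/

import Mathlib

/-- A subgroup `H` of `G` is profinitely dense if it maps onto every finite quotient,
equivalently `H · N = G` for every finite-index normal subgroup `N` of `G`. -/
def ProfinitelyDense {G : Type*} [Group G] (H : Subgroup G) : Prop :=
  ∀ N : Subgroup G, N.Normal → N.FiniteIndex → ∀ g : G, ∃ h ∈ H, ∃ k ∈ N, g = h * k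

/-- A subset `S` of a group freely generates the subgroup it generates:
the canonical map from the free group on `S` is injective. -/
def FreelyGenerates {G : Type*} [Group G] (S : Set G) : Prop :=
  Function.Injective (FreeGroup.lift (fun s : S => (s : G)))

/-!
Every `γ ∈ Δ_n(p)` is `1 + p • D`, and `γ ↦ D mod p` is a homomorphism from `Δ_n(p)` to the
additive group of `n × n` matrices over `𝔽_p`, because `(1 + pA)(1 + pB) = 1 + p(A + B + pAB)`.
Its kernel has finite index, so a profinitely dense subgroup generated by `S` has the same image;
that image therefore lies in the `𝔽_p`-span of the images of `S`, of dimension at most `|S|`.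
The image contains `E_ij` (from the transvection `1 + pE_ij`) and `E_ii - E_jj + E_ij - E_ji`
(from a conjugate of `1 - pE_ji`), hence every trace-zero matrix: dimension `n² - 1`.
-/

open Matrix Module Submodule

theorem ProfinitelyDense.map_eq_range {G H : Type*} [Group G] [Group H] [Finite H]
    {K : Subgroup G} (hK : ProfinitelyDense K) (f : G →* H) : K.map f = f.range := by
  refine le_antisymm (Subgroup.map_le_range f K) ?_
  rintro _ ⟨g, rfl⟩
  obtain ⟨h, hh, k, hk, rfl⟩ := hK f.ker inferInstance inferInstance g
  exact ⟨h, hh, by rw [map_mul, f.mem_ker.mp hk, mul_one]⟩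

theorem ProfinitelyDense.toAdd_mem_span {G R V : Type*} [Group G] [Ring R] [AddCommGroup V]
    [Module R V] [Finite V] {S : Set G} (hS : ProfinitelyDense (Subgroup.closure S))
    (f : G →* Multiplicative V) (g : G) :
    (f g).toAdd ∈ span R ((fun s => (f s).toAdd) '' S) := by
  have hg : f g ∈ Subgroup.closure (f '' S) := by
    rw [← MonoidHom.map_closure, hS.map_eq_range]
    exact ⟨g, rfl⟩
  have hle : Subgroup.closure (f '' S) ≤
      AddSubgroup.toSubgroup (span R ((fun s => (f s).toAdd) '' S)).toAddSubgroup := by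
    rw [Subgroup.closure_le]
    rintro _ ⟨s, hs, rfl⟩
    exact (Multiplicative.mem_toSubgroup _ _).mpr (subset_span ⟨s, hs, rfl⟩)
  exact hle hg

theorem card_sq_sub_one_le_finrank {K ι : Type*} [Field K] [Fintype ι] [DecidableEq ι]
    (W : Submodule K (Matrix ι ι K))
    (hoff : ∀ i j, i ≠ j → single i j (1 : K) ∈ W)
    (hdiag : ∀ i j, i ≠ j → single i i (1 : K) - single j j 1 ∈ W) :
    Fintype.card ι ^ 2 - 1 ≤ finrank K W := by
  rcases isEmpty_or_nonempty ι with hι | ⟨⟨z⟩⟩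
  · simp
  have hsup : W ⊔ K ∙ single z z 1 = ⊤ := by
    rw [eq_top_iff, ← (stdBasis K ι ι).span_eq, span_le]
    rintro _ ⟨⟨i, j⟩, rfl⟩
    rw [stdBasis_eq_single]
    by_cases hij : i = j
    · subst hij
      rcases eq_or_ne i z with rfl | hiz
      · exact mem_sup_right (mem_span_singleton_self _)
      · simpa using add_mem (mem_sup_left (hdiag i z hiz))
          (mem_sup_right (mem_span_singleton_self (single z z (1 : K))))
    · exact mem_sup_left (hoff i j hij)
  calc Fintype.card ι ^ 2 - 1 = finrank K (W ⊔ K ∙ single z z 1 : Submodule K _) - 1 := by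
        rw [hsup, finrank_top, finrank_matrix, finrank_self, sq, mul_one]
    _ ≤ finrank K W + finrank K (K ∙ single z z (1 : K)) - 1 :=
        Nat.sub_le_sub_right (finrank_add_le_finrank_add_finrank _ _) 1
    _ = finrank K W := by
        rw [finrank_span_singleton (stdBasis_eq_single K z z ▸ (stdBasis K ι ι).ne_zero (z, z)),
          Nat.add_sub_cancel]

namespace Matrix

variable {ι : Type*} [DecidableEq ι]

theorem transvection_mul_transvection_mul_transvection [Fintype ι] {R : Type*} [CommRing R]
    {i j : ι} (hij : i ≠ j) (c : R) :
    transvection i j (-1) * transvection j i (-c) * transvection i j 1 =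
      1 + c • (single i i 1 - single j j 1 + single i j 1 - single j i 1) := by
  have expand : ∀ e f : Matrix ι ι R, (1 - e) * (1 - c • f) * (1 + e) =
      1 - e * e - c • (f + f * e - e * f - e * f * e) := by
    intro e f
    simp only [mul_sub, sub_mul, mul_add, mul_one, one_mul, mul_smul_comm,
      smul_mul_assoc, smul_sub, smul_add]
    abel
  have hee : single i j (1 : R) * single i j 1 = 0 := single_mul_single_of_ne _ _ _ _ hij.symm _
  have hef : single i j (1 : R) * single j i 1 = single i i 1 := by simp
  have hfe : single j i (1 : R) * single i j 1 = single j j 1 := by simp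
  have htr : ∀ (k l : ι) (a : R), transvection k l a = 1 + a • single k l 1 := by
    intro k l a; rw [transvection, smul_single, smul_eq_mul, mul_one]
  rw [htr, htr, htr, neg_smul, neg_smul, one_smul, ← sub_eq_add_neg, ← sub_eq_add_neg, expand,
    hee, hef, hfe, single_mul_single_same, mul_one]
  module

variable (p : ℕ)

/-- The division is exact when `M ≡ 1 [mod p]`, the only case where this is meaningful. -/
def congruenceLog (M : Matrix ι ι ℤ) : Matrix ι ι (ZMod p) :=
  of fun i j => (((M - 1) i j / p : ℤ) : ZMod p)

theorem congruenceLog_one_add_smul (hp : p ≠ 0) (D : Matrix ι ι ℤ) :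
    congruenceLog p (1 + (p : ℤ) • D) = D.map (↑) := by
  ext i j
  simp only [congruenceLog, of_apply, add_sub_cancel_left, smul_apply, smul_eq_mul,
    Int.mul_ediv_cancel_left _ (Int.natCast_ne_zero.mpr hp), map_apply]

theorem map_intCast_one_add_smul (D : Matrix ι ι ℤ) :
    (1 + (p : ℤ) • D).map (Int.cast : ℤ → ZMod p) = 1 := by
  ext i j
  rw [map_apply, add_apply, smul_apply, smul_eq_mul]
  push_cast
  simp [one_apply, apply_ite (Int.cast : ℤ → ZMod p)]

theorem exists_eq_one_add_smul_of_map_intCast_eq_one {M : Matrix ι ι ℤ}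
    (hM : M.map (Int.cast : ℤ → ZMod p) = 1) : ∃ D, M = 1 + (p : ℤ) • D := by
  have hdvd : ∀ i j, (p : ℤ) ∣ (M - 1) i j := by
    intro i j
    rw [← ZMod.intCast_zmod_eq_zero_iff_dvd]
    have := congrFun (congrFun hM i) j
    simp_all [one_apply, apply_ite (Int.cast : ℤ → ZMod p)]
  choose D hD using hdvd
  exact ⟨of D, by ext i j; simp [← hD]⟩

theorem congruenceLog_mul [Fintype ι] (hp : p ≠ 0) {M N : Matrix ι ι ℤ}
    (hM : M.map (Int.cast : ℤ → ZMod p) = 1) (hN : N.map (Int.cast : ℤ → ZMod p) = 1) :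
    congruenceLog p (M * N) = congruenceLog p M + congruenceLog p N := by
  obtain ⟨A, rfl⟩ := exists_eq_one_add_smul_of_map_intCast_eq_one p hM
  obtain ⟨B, rfl⟩ := exists_eq_one_add_smul_of_map_intCast_eq_one p hN
  have hprod : (1 + (p : ℤ) • A) * (1 + (p : ℤ) • B) =
      1 + (p : ℤ) • (A + B + (p : ℤ) • (A * B)) := by
    simp only [mul_add, add_mul, mul_one, one_mul, smul_mul_smul_comm, smul_add, smul_smul]
    abel
  rw [hprod, congruenceLog_one_add_smul p hp, congruenceLog_one_add_smul p hp,
    congruenceLog_one_add_smul p hp]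
  ext i j
  simp only [map_apply, add_apply, smul_apply, smul_eq_mul]
  push_cast
  simp

end Matrix

namespace Matrix.SpecialLinearGroup

variable (ι : Type*) [Fintype ι] [DecidableEq ι] (p : ℕ)

abbrev principalCongruenceSubgroup : Subgroup (SpecialLinearGroup ι ℤ) :=
  (map (Int.castRingHom (ZMod p))).ker

variable {ι p}

theorem mem_principalCongruenceSubgroup_iff {γ : SpecialLinearGroup ι ℤ} :
    γ ∈ principalCongruenceSubgroup ι p ↔ (γ : Matrix ι ι ℤ).map (Int.cast : ℤ → ZMod p) = 1 :=
  MonoidHom.mem_ker.trans Subtype.ext_iff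

variable (p) in
def congruenceLogHom (hp : p ≠ 0) :
    principalCongruenceSubgroup ι p →* Multiplicative (Matrix ι ι (ZMod p)) where
  toFun γ := .ofAdd (congruenceLog p (γ : Matrix ι ι ℤ))
  map_one' := congrArg Multiplicative.ofAdd (by ext; simp [congruenceLog])
  map_mul' a b := congruenceLog_mul p hp (mem_principalCongruenceSubgroup_iff.mp a.2)
    (mem_principalCongruenceSubgroup_iff.mp b.2)

theorem exists_congruenceLogHom_eq (hp : p ≠ 0) {D : Matrix ι ι ℤ}
    (hD : (1 + (p : ℤ) • D).det = 1) :
    ∃ γ, congruenceLogHom p hp γ = .ofAdd (D.map (↑)) :=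
  ⟨⟨⟨1 + (p : ℤ) • D, hD⟩, mem_principalCongruenceSubgroup_iff.mpr (map_intCast_one_add_smul p D)⟩,
    congrArg Multiplicative.ofAdd (congruenceLog_one_add_smul p hp D)⟩

theorem card_sq_sub_one_le_finrank_of_congruenceLogHom_mem (hp : p.Prime)
    {W : Submodule (ZMod p) (Matrix ι ι (ZMod p))}
    (hW : ∀ γ, (congruenceLogHom p hp.ne_zero γ).toAdd ∈ W) :
    Fintype.card ι ^ 2 - 1 ≤ finrank (ZMod p) W := by
  have := Fact.mk hp
  have hmem : ∀ D : Matrix ι ι ℤ, (1 + (p : ℤ) • D).det = 1 →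
      (Int.castRingHom (ZMod p)).mapMatrix D ∈ W := by
    intro D hD
    obtain ⟨γ, hγ⟩ := exists_congruenceLogHom_eq hp.ne_zero hD
    have := hW γ
    rwa [hγ, toAdd_ofAdd] at this
  have hoff : ∀ i j, i ≠ j → single i j (1 : ZMod p) ∈ W := by
    intro i j hij
    have hdet : (1 + (p : ℤ) • single i j (1 : ℤ) : Matrix ι ι ℤ).det = 1 := by
      rw [smul_single, smul_eq_mul, mul_one, ← Matrix.transvection, det_transvection_of_ne _ _ hij]
    simpa only [RingHom.mapMatrix_apply, map_single, map_one] using hmem _ hdet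
  have hdiag : ∀ i j, i ≠ j → single i i (1 : ZMod p) - single j j 1 ∈ W := by
    intro i j hij
    have hdet : (1 + (p : ℤ) • (single i i 1 - single j j 1 + single i j 1 - single j i 1) :
        Matrix ι ι ℤ).det = 1 := by
      rw [← transvection_mul_transvection_mul_transvection hij]
      simp [det_transvection_of_ne, hij, hij.symm]
    have hsum := hmem _ hdet
    simp only [map_sub, map_add, RingHom.mapMatrix_apply, map_single, map_one] at hsum
    convert sub_mem (add_mem hsum (hoff j i hij.symm)) (hoff i j hij) using 1
    abel
  exact card_sq_sub_one_le_finrank W hoff hdiag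

theorem card_sq_sub_one_le_card_of_profinitelyDense (hp : p.Prime)
    (S : Finset (principalCongruenceSubgroup ι p))
    (hS : ProfinitelyDense (Subgroup.closure (S : Set (principalCongruenceSubgroup ι p)))) :
    Fintype.card ι ^ 2 - 1 ≤ S.card := by
  have := Fact.mk hp
  set T := S.image fun s => (congruenceLogHom p hp.ne_zero s).toAdd
  calc Fintype.card ι ^ 2 - 1 ≤ (T : Set (Matrix ι ι (ZMod p))).finrank (ZMod p) := by
        refine card_sq_sub_one_le_finrank_of_congruenceLogHom_mem hp fun γ => ?_
        rw [Finset.coe_image]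
        exact hS.toAdd_mem_span _ γ
    _ ≤ T.card := finrank_span_finset_le_card T
    _ ≤ S.card := Finset.card_image_le

end Matrix.SpecialLinearGroup

theorem card_ge_of_profinitely_dense_in_congruence_subgroup_general
    (p : ℕ) (hp : p.Prime) (n : ℕ)
    (Δ : Subgroup (Matrix.SpecialLinearGroup (Fin n) ℤ))
    (hΔ : Δ = (Matrix.SpecialLinearGroup.map (n := Fin n)
      (Int.castRingHom (ZMod p))).ker) :
    (∀ S : Finset Δ,
      ProfinitelyDense (Subgroup.closure (S : Set Δ)) → n ^ 2 - 1 ≤ S.card) ∧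
    (∀ S : Set Δ, S.Finite → FreelyGenerates S →
      ProfinitelyDense (Subgroup.closure S) → n ^ 2 - 1 ≤ S.ncard) := by
  have hfinset (S : Finset Δ) (hS : ProfinitelyDense (Subgroup.closure (S : Set Δ))) :
      n ^ 2 - 1 ≤ S.card := by
    subst hΔ
    simpa using SpecialLinearGroup.card_sq_sub_one_le_card_of_profinitelyDense hp S hS
  refine ⟨hfinset, fun S hS _ hdense => ?_⟩
  rw [Set.ncard_eq_toFinset_card S hS]
  exact hfinset _ (by rwa [Set.Finite.coe_toFinset])

/-- Every finite subset of the principal congruence subgroup `Δ_n(p)` generating a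
profinitely dense subgroup of `Δ_n(p)` has at least `n² − 1` elements; in particular
every profinitely dense free subgroup of finite rank has rank at least `n² − 1`. -/
theorem card_ge_of_profinitely_dense_in_congruence_subgroup
    (p : ℕ) (hp : p.Prime) (n : ℕ) (hn : 2 ≤ n)
    (Δ : Subgroup (Matrix.SpecialLinearGroup (Fin n) ℤ))
    (hΔ : Δ = (Matrix.SpecialLinearGroup.map (n := Fin n)
      (Int.castRingHom (ZMod p))).ker) :
    (∀ S : Finset Δ,
      ProfinitelyDense (Subgroup.closure (S : Set Δ)) → n ^ 2 - 1 ≤ S.card) ∧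
    (∀ S : Set Δ, S.Finite → FreelyGenerates S →
      ProfinitelyDense (Subgroup.closure S) → n ^ 2 - 1 ≤ S.ncard) :=
  card_ge_of_profinitely_dense_in_congruence_subgroup_general p hp n Δ hΔ
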